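/- arXiv:1004.0155 — 4 statements merged into one kernel-verified Lean document; each statement's English description precedes it below -/
import Mathlib

section
/- An n-dimensional evolution algebra E over ℝ with structural constants matrix M = (a_{ij}) is baric (admits a nonzero multiplicative linear form σ: E → ℝ) if and only if there exists an index i₀ such that a_{i₀i₀} ≠ 0 and a_{ii₀} = 0 for all i ≠ i₀. Moreover, in this case σ(x) = a_{i₀i₀}·x_{i₀} is a weight function. -/
/-- Multiplication of the evolution algebra on `Fin n → ℝ` with structural
constants matrix `a` : `(x ⋆ y)_j = ∑ i, a i j * x i * y i`. -/
def evolMul (n : ℕ) (a : Fin n → Fin n → ℝ) (x y : Fin n → ℝ) : Fin n → ℝ :=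
  fun j => ∑ i, a i j * (x i * y i)

/-!
Write `cᵢ = σ eᵢ` for a character `σ`. Since `eᵢ eⱼ = 0` for `i ≠ j`, `cᵢ cⱼ = 0`, so only one
`cᵢ₀ =: c` is nonzero and `σ = c • proj i₀`. Applying `σ` to `eᵢ eᵢ = ∑ⱼ aᵢⱼ eⱼ` gives
`c aᵢᵢ₀ = cᵢ²`: at `i = i₀` this forces `c = aᵢ₀ᵢ₀ ≠ 0`, and for `i ≠ i₀` it forces `aᵢᵢ₀ = 0`.
Conversely, under these conditions the `i₀`-th coordinate of `x y` is `aᵢ₀ᵢ₀ xᵢ₀ yᵢ₀`, so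
`aᵢ₀ᵢ₀ • proj i₀` is multiplicative.
-/

namespace LinearMap

variable {R ι : Type*} [CommSemiring R] [DecidableEq ι]

theorem exists_apply_single_ne_zero [Finite ι] {σ : (ι → R) →ₗ[R] R} (hσ : σ ≠ 0) :
    ∃ i, σ (Pi.single i 1) ≠ 0 := by
  by_contra! h
  exact hσ (by ext i; simp [h])

theorem eq_smul_proj_of_apply_single_eq_zero [Finite ι] (σ : (ι → R) →ₗ[R] R) (i₀ : ι)
    (h : ∀ i, i ≠ i₀ → σ (Pi.single i 1) = 0) :
    σ = σ (Pi.single i₀ 1) • proj i₀ := by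
  ext i
  rcases eq_or_ne i i₀ with rfl | hi
  · simp
  · simp [h i hi, hi.symm]

theorem smul_proj_ne_zero {c : R} (hc : c ≠ 0) (i : ι) :
    (c • proj i : (ι → R) →ₗ[R] R) ≠ 0 := by
  intro h
  exact hc (by simpa using congr($h (Pi.single i 1)))

end LinearMap

section EvolutionAlgebra

open LinearMap

variable {n : ℕ} {a : Fin n → Fin n → ℝ}

theorem evolMul_single_of_ne {i j : Fin n} (hij : i ≠ j) :
    evolMul n a (Pi.single i 1) (Pi.single j 1) = 0 := by
  funext k
  refine Finset.sum_eq_zero fun m _ => ?_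
  rcases eq_or_ne m i with rfl | hmi
  · simp [Pi.single_eq_of_ne hij]
  · simp [Pi.single_eq_of_ne hmi]

theorem evolMul_single_self (i : Fin n) :
    evolMul n a (Pi.single i 1) (Pi.single i 1) = a i := by
  funext k
  simp [evolMul, Pi.single_apply]

theorem evolMul_apply_of_column_eq_zero {i₀ : Fin n} (hcol : ∀ i, i ≠ i₀ → a i i₀ = 0)
    (x y : Fin n → ℝ) : evolMul n a x y i₀ = a i₀ i₀ * (x i₀ * y i₀) :=
  Finset.sum_eq_single i₀ (fun i _ hi => by rw [hcol i hi, zero_mul]) (by simp)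

theorem smul_proj_map_evolMul {i₀ : Fin n} (hcol : ∀ i, i ≠ i₀ → a i i₀ = 0)
    (x y : Fin n → ℝ) :
    (a i₀ i₀ • proj i₀ : (Fin n → ℝ) →ₗ[ℝ] ℝ) (evolMul n a x y) =
      (a i₀ i₀ • proj i₀ : (Fin n → ℝ) →ₗ[ℝ] ℝ) x *
        (a i₀ i₀ • proj i₀ : (Fin n → ℝ) →ₗ[ℝ] ℝ) y := by
  simp only [LinearMap.smul_apply, proj_apply, smul_eq_mul, evolMul_apply_of_column_eq_zero hcol]
  ring

theorem exists_column_of_map_evolMul {σ : (Fin n → ℝ) →ₗ[ℝ] ℝ} (hσ : σ ≠ 0)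
    (hmul : ∀ x y, σ (evolMul n a x y) = σ x * σ y) :
    ∃ i₀, a i₀ i₀ ≠ 0 ∧ ∀ i, i ≠ i₀ → a i i₀ = 0 := by
  obtain ⟨i₀, hi₀⟩ := exists_apply_single_ne_zero hσ
  set c := σ (Pi.single i₀ 1)
  have hvanish : ∀ i, i ≠ i₀ → σ (Pi.single i 1) = 0 := fun i hi => by
    have := hmul (Pi.single i 1) (Pi.single i₀ 1)
    rw [evolMul_single_of_ne hi, map_zero] at this
    exact (mul_eq_zero.mp this.symm).resolve_right hi₀
  have hσ_apply (x : Fin n → ℝ) : σ x = c * x i₀ :=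
    congr($(eq_smul_proj_of_apply_single_eq_zero σ i₀ hvanish) x)
  have hsq : ∀ i, c * a i i₀ = σ (Pi.single i 1) * σ (Pi.single i 1) := fun i => by
    rw [← hσ_apply, ← evolMul_single_self (a := a), hmul]
  have hdiag : a i₀ i₀ = c := mul_left_cancel₀ hi₀ (hsq i₀)
  refine ⟨i₀, hdiag ▸ hi₀, fun i hi => ?_⟩
  simpa [hvanish i hi, hi₀] using hsq i

theorem exists_weight_of_column {i₀ : Fin n} (hdiag : a i₀ i₀ ≠ 0)
    (hcol : ∀ i, i ≠ i₀ → a i i₀ = 0) :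
    ∃ σ : (Fin n → ℝ) →ₗ[ℝ] ℝ, σ ≠ 0 ∧ (∀ x y, σ (evolMul n a x y) = σ x * σ y) ∧
      ∀ x, σ x = a i₀ i₀ * x i₀ :=
  ⟨a i₀ i₀ • proj i₀, smul_proj_ne_zero hdiag i₀, smul_proj_map_evolMul hcol, fun _ => rfl⟩

end EvolutionAlgebra

theorem baric_criterion (n : ℕ) (a : Fin n → Fin n → ℝ) :
    ((∃ σ : (Fin n → ℝ) →ₗ[ℝ] ℝ, σ ≠ 0 ∧
        ∀ x y : Fin n → ℝ, σ (evolMul n a x y) = σ x * σ y) ↔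
      ∃ i0 : Fin n, a i0 i0 ≠ 0 ∧ ∀ i : Fin n, i ≠ i0 → a i i0 = 0) ∧
    (∀ i0 : Fin n, (a i0 i0 ≠ 0 ∧ ∀ i : Fin n, i ≠ i0 → a i i0 = 0) →
      ∃ σ : (Fin n → ℝ) →ₗ[ℝ] ℝ, σ ≠ 0 ∧
        (∀ x y : Fin n → ℝ, σ (evolMul n a x y) = σ x * σ y) ∧
        ∀ x : Fin n → ℝ, σ x = a i0 i0 * x i0) := by
  refine ⟨⟨fun ⟨σ, hσ, hmul⟩ => exists_column_of_map_evolMul hσ hmul, ?_⟩,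
    fun i0 ⟨hdiag, hcol⟩ => exists_weight_of_column hdiag hcol⟩
  rintro ⟨i0, hdiag, hcol⟩
  obtain ⟨σ, hσ, hmul, -⟩ := exists_weight_of_column hdiag hcol
  exact ⟨σ, hσ, hmul⟩
end

section
/- If the structural constants matrix M of an n-dimensional evolution algebra E over ℝ has exactly m columns with indices i₁,…,i_m such that a_{i_j i_j} ≠ 0 and a_{k i_j} = 0 for all k ≠ i_j, then E has exactly m weight functions, namely σ_j(x) = a_{i_j i_j}·x_{i_j} for j = 1,…,m. -/
/-- The candidate weight function `σ_j(x) = a_{jj} x_j` as a linear map. -/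
noncomputable def weightFn (n : ℕ) (a : Fin n → Fin n → ℝ) (j : Fin n) :
    (Fin n → ℝ) →ₗ[ℝ] ℝ :=
  a j j • LinearMap.proj j

theorem LinearMap.eq_smul_proj_of_apply_single_eq_zero_s8 {R ι : Type*} [CommSemiring R]
    [Finite ι] [DecidableEq ι] (f : (ι → R) →ₗ[R] R) (j : ι)
    (hf : ∀ k, k ≠ j → f (Pi.single k 1) = 0) :
    f = f (Pi.single j 1) • LinearMap.proj j := by
  refine (Pi.basisFun R ι).ext fun k => ?_
  rcases eq_or_ne k j with rfl | hk
  · simp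
  · simp [hf k hk, hk]

namespace EvolutionAlgebra

variable {n : ℕ} {a : Fin n → Fin n → ℝ}

def IsWeightFunction (n : ℕ) (a : Fin n → Fin n → ℝ) (σ : (Fin n → ℝ) →ₗ[ℝ] ℝ) : Prop :=
  σ ≠ 0 ∧ ∀ x y : Fin n → ℝ, σ (evolMul n a x y) = σ x * σ y

theorem weightFn_apply (j : Fin n) (x : Fin n → ℝ) : weightFn n a j x = a j j * x j := rfl

theorem evolMul_single_self (i : Fin n) :
    evolMul n a (Pi.single i 1) (Pi.single i 1) = a i := by
  funext j
  simp [evolMul, Pi.single_apply]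

theorem evolMul_single_of_ne {i k : Fin n} (hik : i ≠ k) :
    evolMul n a (Pi.single i 1) (Pi.single k 1) = 0 := by
  funext j
  refine Finset.sum_eq_zero fun l _ => ?_
  rcases eq_or_ne l i with rfl | hl
  · simp [hik.symm]
  · simp [hl]

theorem weightFn_evolMul {j : Fin n} (hcol : ∀ k, k ≠ j → a k j = 0) (x y : Fin n → ℝ) :
    weightFn n a j (evolMul n a x y) = weightFn n a j x * weightFn n a j y := by
  have hsum : evolMul n a x y j = a j j * (x j * y j) :=
    Fintype.sum_eq_single j fun k hk => by rw [hcol k hk, zero_mul]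
  simp only [weightFn_apply, hsum]
  ring

theorem isWeightFunction_weightFn {j : Fin n} (hjj : a j j ≠ 0)
    (hcol : ∀ k, k ≠ j → a k j = 0) : IsWeightFunction n a (weightFn n a j) := by
  refine ⟨fun h => hjj ?_, weightFn_evolMul hcol⟩
  simpa [weightFn_apply] using LinearMap.congr_fun h (Pi.single j 1)

theorem IsWeightFunction.exists_eq_smul_proj {σ : (Fin n → ℝ) →ₗ[ℝ] ℝ}
    (hσ : IsWeightFunction n a σ) :
    ∃ j, σ (Pi.single j 1) ≠ 0 ∧ σ = σ (Pi.single j 1) • LinearMap.proj j := by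
  obtain ⟨hne, hmul⟩ := hσ
  obtain ⟨j, hj⟩ : ∃ j, σ (Pi.single j 1) ≠ 0 := by
    by_contra! h
    exact hne ((Pi.basisFun ℝ (Fin n)).ext fun i => by simp [h i])
  refine ⟨j, hj, σ.eq_smul_proj_of_apply_single_eq_zero_s8 j fun k hk => ?_⟩
  have hkj : σ (Pi.single k 1) * σ (Pi.single j 1) = 0 := by
    rw [← hmul, evolMul_single_of_ne hk, map_zero]
  exact (mul_eq_zero.mp hkj).resolve_right hj

theorem IsWeightFunction.exists_eq_weightFn {σ : (Fin n → ℝ) →ₗ[ℝ] ℝ}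
    (hσ : IsWeightFunction n a σ) :
    ∃ j, (a j j ≠ 0 ∧ ∀ k, k ≠ j → a k j = 0) ∧ σ = weightFn n a j := by
  obtain ⟨j, hc, hσj⟩ := hσ.exists_eq_smul_proj
  set c := σ (Pi.single j 1)
  have hsq (i : Fin n) :
      c * a i j = c * (Pi.single i 1 : Fin n → ℝ) j * (c * (Pi.single i 1 : Fin n → ℝ) j) := by
    have h := hσ.2 (Pi.single i 1) (Pi.single i 1)
    rw [evolMul_single_self, hσj] at h
    exact h
  have hjj : a j j = c := mul_left_cancel₀ hc (by simpa using hsq j)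
  have hcol : ∀ k, k ≠ j → a k j = 0 := fun k hk =>
    (mul_eq_zero.mp (by simpa [Pi.single_eq_of_ne' hk] using hsq k)).resolve_left hc
  refine ⟨j, ⟨hjj ▸ hc, hcol⟩, ?_⟩
  rw [hσj, weightFn, hjj]

theorem isWeightFunction_iff {σ : (Fin n → ℝ) →ₗ[ℝ] ℝ} :
    IsWeightFunction n a σ ↔
      ∃ j, (a j j ≠ 0 ∧ ∀ k, k ≠ j → a k j = 0) ∧ σ = weightFn n a j := by
  refine ⟨IsWeightFunction.exists_eq_weightFn, ?_⟩
  rintro ⟨j, ⟨hjj, hcol⟩, rfl⟩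
  exact isWeightFunction_weightFn hjj hcol

theorem weightFn_injOn : Set.InjOn (weightFn n a) {j | a j j ≠ 0} := by
  intro j hj j' _ h
  by_contra hne
  exact hj (by simpa [weightFn_apply, Pi.single_apply, Ne.symm hne]
    using LinearMap.congr_fun h (Pi.single j 1))

end EvolutionAlgebra

open EvolutionAlgebra in
theorem exactly_m_weight_functions (n : ℕ) (a : Fin n → Fin n → ℝ)
    (S : Finset (Fin n))
    (hS : ∀ j : Fin n, j ∈ S ↔ (a j j ≠ 0 ∧ ∀ k : Fin n, k ≠ j → a k j = 0)) :
    (∀ σ : (Fin n → ℝ) →ₗ[ℝ] ℝ,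
      (σ ≠ 0 ∧ ∀ x y : Fin n → ℝ, σ (evolMul n a x y) = σ x * σ y) ↔
        ∃ j ∈ S, σ = weightFn n a j) ∧
    Set.InjOn (weightFn n a) ↑S := by
  refine ⟨fun σ => ?_, weightFn_injOn.mono fun j hj => ((hS j).mp hj).1⟩
  simp only [hS]
  exact isWeightFunction_iff
end

section
/- For a, b ∈ [-1,1] with a ≠ b and a ≠ -b, the two-dimensional evolution algebras E⁺_a and E⁺_b with structural constant matrices [[a, √(1-a²)],[-√(1-a²), a]] and [[b, √(1-b²)],[-√(1-b²), b]] respectively are not isomorphic as ℝ-algebras. -/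
/-- Multiplication of the 2-dimensional evolution algebra `E⁺_a` on `ℝ × ℝ`:
`e₁² = a e₁ + √(1-a²) e₂`, `e₂² = -√(1-a²) e₁ + a e₂`, `e₁e₂ = 0`. -/
noncomputable def Emul (a : ℝ) (x y : ℝ × ℝ) : ℝ × ℝ :=
  (a * (x.1 * y.1) - Real.sqrt (1 - a ^ 2) * (x.2 * y.2),
    Real.sqrt (1 - a ^ 2) * (x.1 * y.1) + a * (x.2 * y.2))

/-! The trace and determinant of the left multiplications `L_x` are isomorphism invariants.
In `E⁺_a` the matrix of `L_x` is a rotation times `diag(x₁, x₂)`, so `tr L_x = a (x₁ + x₂)` and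
`det L_x = x₁ x₂`. An isomorphism `E⁺_a → E⁺_b` therefore sends `e₁, e₂` to vectors `u, v` with
`u₁ u₂ = v₁ v₂ = 0` and `(u + v)₁ (u + v)₂ = 1`, which forces `(u₁ + u₂)(v₁ + v₂) = 1`, while
`b (u₁ + u₂) = a = b (v₁ + v₂)`. Multiplying gives `a² = b²`. -/

theorem LinearEquiv.conj_eq_of_apply_comm {R M N : Type*} [CommSemiring R] [AddCommMonoid M]
    [Module R M] [AddCommMonoid N] [Module R N] (e : M ≃ₗ[R] N) {f : Module.End R M}
    {g : Module.End R N} (h : ∀ x, e (f x) = g (e x)) : e.conj f = g := by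
  ext y
  simp [LinearEquiv.conj_apply, h]

theorem add_mul_add_eq_one_of_mul_eq_zero {R : Type*} [CommRing R] {u₁ u₂ v₁ v₂ : R}
    (hu : u₁ * u₂ = 0) (hv : v₁ * v₂ = 0) (huv : (u₁ + v₁) * (u₂ + v₂) = 1) :
    (u₁ + u₂) * (v₁ + v₂) = 1 := by
  have h₁ : u₁ * v₁ = 0 := by
    linear_combination -(u₁ * v₁) * huv + (u₁ * v₁ + v₁ ^ 2) * hu + (u₁ ^ 2 + u₁ * v₁) * hv
  have h₂ : u₂ * v₂ = 0 := by
    linear_combination -(u₂ * v₂) * huv + (u₂ * v₂ + v₂ ^ 2) * hu + (u₂ ^ 2 + u₂ * v₂) * hv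
  linear_combination huv - hu - hv + h₁ + h₂

namespace Emul

noncomputable def mulLeft (a : ℝ) (x : ℝ × ℝ) : Module.End ℝ (ℝ × ℝ) where
  toFun := Emul a x
  map_add' y z := by
    ext <;> simp only [Emul, Prod.fst_add, Prod.snd_add] <;> ring
  map_smul' c y := by
    ext <;> simp only [Emul, Prod.smul_fst, Prod.smul_snd, smul_eq_mul, RingHom.id_apply] <;> ring

@[simp]
theorem mulLeft_apply (a : ℝ) (x y : ℝ × ℝ) : mulLeft a x y = Emul a x y := rfl

theorem toMatrix_mulLeft (a : ℝ) (x : ℝ × ℝ) :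
    LinearMap.toMatrix (Module.Basis.finTwoProd ℝ) (Module.Basis.finTwoProd ℝ) (mulLeft a x) =
      !![a * x.1, -(√(1 - a ^ 2) * x.2); √(1 - a ^ 2) * x.1, a * x.2] := by
  ext i j
  fin_cases i <;> fin_cases j <;> simp [LinearMap.toMatrix_apply, Emul]

theorem trace_mulLeft (a : ℝ) (x : ℝ × ℝ) :
    LinearMap.trace ℝ _ (mulLeft a x) = a * (x.1 + x.2) := by
  rw [LinearMap.trace_eq_matrix_trace ℝ (Module.Basis.finTwoProd ℝ), toMatrix_mulLeft,
    Matrix.trace_fin_two_of]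
  ring

theorem det_mulLeft {a : ℝ} (ha : a ∈ Set.Icc (-1 : ℝ) 1) (x : ℝ × ℝ) :
    LinearMap.det (mulLeft a x) = x.1 * x.2 := by
  have hs : √(1 - a ^ 2) ^ 2 = 1 - a ^ 2 := Real.sq_sqrt (by nlinarith [ha.1, ha.2])
  rw [← LinearMap.det_toMatrix (Module.Basis.finTwoProd ℝ), toMatrix_mulLeft,
    Matrix.det_fin_two_of]
  linear_combination x.1 * x.2 * hs

theorem mulLeft_map {a b : ℝ} {f : (ℝ × ℝ) ≃ₗ[ℝ] (ℝ × ℝ)}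
    (hf : ∀ x y, f (Emul a x y) = Emul b (f x) (f y)) (x : ℝ × ℝ) :
    mulLeft b (f x) = f.conj (mulLeft a x) :=
  (f.conj_eq_of_apply_comm (hf x)).symm

theorem trace_mulLeft_map {a b : ℝ} {f : (ℝ × ℝ) ≃ₗ[ℝ] (ℝ × ℝ)}
    (hf : ∀ x y, f (Emul a x y) = Emul b (f x) (f y)) (x : ℝ × ℝ) :
    b * ((f x).1 + (f x).2) = a * (x.1 + x.2) := by
  rw [← trace_mulLeft b (f x), ← trace_mulLeft a x, mulLeft_map hf, LinearMap.trace_conj']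

theorem det_mulLeft_map {a b : ℝ} (ha : a ∈ Set.Icc (-1 : ℝ) 1) (hb : b ∈ Set.Icc (-1 : ℝ) 1)
    {f : (ℝ × ℝ) ≃ₗ[ℝ] (ℝ × ℝ)} (hf : ∀ x y, f (Emul a x y) = Emul b (f x) (f y))
    (x : ℝ × ℝ) : (f x).1 * (f x).2 = x.1 * x.2 := by
  rw [← det_mulLeft hb (f x), ← det_mulLeft ha x, mulLeft_map hf, LinearEquiv.conj_apply,
    LinearMap.comp_assoc, LinearMap.det_conj]

end Emul

theorem Eplus_not_isomorphic (a b : ℝ) (ha : a ∈ Set.Icc (-1 : ℝ) 1)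
    (hb : b ∈ Set.Icc (-1 : ℝ) 1) (hab : a ≠ b) (hab' : a ≠ -b) :
    ¬ ∃ f : (ℝ × ℝ) ≃ₗ[ℝ] (ℝ × ℝ),
      ∀ x y : ℝ × ℝ, f (Emul a x y) = Emul b (f x) (f y) := by
  rintro ⟨f, hf⟩
  set u := f (1, 0)
  set v := f (0, 1)
  have hdet := Emul.det_mulLeft_map ha hb hf
  have huv : (u.1 + u.2) * (v.1 + v.2) = 1 := by
    refine add_mul_add_eq_one_of_mul_eq_zero ((hdet _).trans ?_) ((hdet _).trans ?_) ?_
    · norm_num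
    · norm_num
    · rw [← Prod.fst_add, ← Prod.snd_add, ← map_add, hdet]
      norm_num
  have hu : b * (u.1 + u.2) = a := by simpa using Emul.trace_mulLeft_map hf (1, 0)
  have hv : b * (v.1 + v.2) = a := by simpa using Emul.trace_mulLeft_map hf (0, 1)
  have hsq : (a - b) * (a + b) = 0 := by
    linear_combination (-a) * hv - b * (v.1 + v.2) * hu + b ^ 2 * huv
  rcases mul_eq_zero.mp hsq with h | h
  · exact hab (sub_eq_zero.mp h)
  · exact hab' (eq_neg_of_add_eq_zero_left h)
end

section
/- For any a ∈ [-1,1], the evolution algebras E⁺_a and E⁺_{-a} (with structural matrices [[a, √(1-a²)],[-√(1-a²), a]] and [[-a, √(1-a²)],[-√(1-a²), -a]]) are isomorphic. -/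
/-- The isomorphism is `e₁ ↦ -e₂, e₂ ↦ -e₁`; it fixes the off-diagonal coefficient because
`√(1 - (-a)²) = √(1 - a²)`. -/
theorem Eplus_isomorphic_neg_general (a : ℝ) :
    ∃ f : (ℝ × ℝ) ≃ₗ[ℝ] (ℝ × ℝ),
      ∀ x y : ℝ × ℝ, f (Emul a x y) = Emul (-a) (f x) (f y) := by
  refine ⟨(LinearEquiv.prodComm ℝ ℝ ℝ).trans (LinearEquiv.neg ℝ), fun x y => ?_⟩
  ext <;> simp [Emul] <;> ring

theorem Eplus_isomorphic_neg (a : ℝ) (ha : a ∈ Set.Icc (-1 : ℝ) 1) :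
    ∃ f : (ℝ × ℝ) ≃ₗ[ℝ] (ℝ × ℝ),
      ∀ x y : ℝ × ℝ, f (Emul a x y) = Emul (-a) (f x) (f y) :=
  Eplus_isomorphic_neg_general a
end
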